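/- In S = F[[x,y]]/(x²y), the map sending the maximal ideal generator x to x² and y to 0 extends to a well-defined S-module endomorphism of the maximal ideal m = (x, y); equivalently, multiplication by z = x²(x+y)^{-1} (an element of the total quotient ring) maps m into m. -/
import Mathlib


noncomputable section

/-- The D-infinity plane singularity `S = F[[x,y]]/(x²y)`. -/
abbrev Dinf (F : Type*) [Field F] : Type _ :=
  MvPowerSeries (Fin 2) F ⧸
    (Ideal.span {(MvPowerSeries.X (0 : Fin 2)) ^ 2 * MvPowerSeries.X 1} :
      Ideal (MvPowerSeries (Fin 2) F))

variable (F : Type*) [Field F]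

/-- The image of the variable `x` in `S`. -/
abbrev xS : Dinf F := Ideal.Quotient.mk _ (MvPowerSeries.X 0)

/-- The image of the variable `y` in `S`. -/
abbrev yS : Dinf F := Ideal.Quotient.mk _ (MvPowerSeries.X 1)

/-- The total quotient ring `Q` of `S`, the localization at the nonzerodivisors. -/
abbrev QS : Type _ := Localization (nonZeroDivisors (Dinf F))

/-- The canonical map `S → Q`. -/
abbrev toQ : Dinf F →+* QS F := algebraMap (Dinf F) (QS F)

/-- The element `z = x²(x+y)⁻¹` of the total quotient ring `Q`. -/
abbrev zQ : QS F := toQ F (xS F ^ 2) * Ring.inverse (toQ F (xS F + yS F))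

set_option maxHeartbeats 1000000 in
set_option synthInstance.maxHeartbeats 400000 in
theorem stmt13 (hu : IsUnit (toQ F (xS F + yS F))) :
    zQ F * toQ F (xS F) = toQ F (xS F ^ 2) ∧
    zQ F * toQ F (yS F) = 0 ∧
    ∀ a ∈ (Ideal.span {xS F, yS F} : Ideal (Dinf F)),
      ∃ b ∈ (Ideal.span {xS F, yS F} : Ideal (Dinf F)), zQ F * toQ F a = toQ F b := by
  have hxy : xS F ^ 2 * yS F = 0 := by
    have : ((MvPowerSeries.X (0 : Fin 2)) ^ 2 * MvPowerSeries.X 1 :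
        MvPowerSeries (Fin 2) F) ∈ Ideal.span {(MvPowerSeries.X (0 : Fin 2)) ^ 2 *
        MvPowerSeries.X 1} := Ideal.subset_span rfl
    have h0 := (Ideal.Quotient.eq_zero_iff_mem).mpr this
    simpa [map_mul, map_pow] using h0
  have h1 : zQ F * toQ F (xS F) = toQ F (xS F ^ 2) := by
    have hcube : xS F ^ 2 * xS F = xS F ^ 2 * (xS F + yS F) := by
      rw [mul_add, hxy, add_zero]
    calc zQ F * toQ F (xS F)
        = toQ F (xS F ^ 2 * xS F) * Ring.inverse (toQ F (xS F + yS F)) := by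
          rw [map_mul]; ring
      _ = toQ F (xS F ^ 2) * (toQ F (xS F + yS F) * Ring.inverse (toQ F (xS F + yS F))) := by
          rw [hcube, map_mul]; ring
      _ = toQ F (xS F ^ 2) := by rw [Ring.mul_inverse_cancel _ hu, mul_one]
  have h2 : zQ F * toQ F (yS F) = 0 := by
    calc zQ F * toQ F (yS F)
        = toQ F (xS F ^ 2 * yS F) * Ring.inverse (toQ F (xS F + yS F)) := by
          rw [map_mul]; ring
      _ = 0 := by rw [hxy, map_zero, zero_mul]
  refine ⟨h1, h2, fun a ha => ?_⟩
  obtain ⟨u, v, huv⟩ := Ideal.mem_span_pair.mp ha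
  refine ⟨u * xS F ^ 2, ?_, ?_⟩
  · exact Ideal.mul_mem_left _ _
      (Ideal.pow_mem_of_mem _ (Ideal.subset_span (by simp)) 2 two_pos)
  · calc zQ F * toQ F a = zQ F * toQ F (u * xS F + v * yS F) := by rw [huv]
      _ = toQ F u * (zQ F * toQ F (xS F)) + toQ F v * (zQ F * toQ F (yS F)) := by
          rw [map_add, map_mul, map_mul]; ring
      _ = toQ F (u * xS F ^ 2) := by rw [h1, h2, map_mul]; ring
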